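/- Let A = (A_{ij}) be an n×n operator matrix acting on the direct sum H = ⊕ᵢ Hᵢ of Hilbert spaces, with A_{ij} ∈ B(Hⱼ, Hᵢ). Then w(A) ≤ max over 1 ≤ i ≤ n of [ w(A_{ii}) + (1/2)·∑_{j≠i} (‖A_{ij}‖ + ‖A_{ji}‖) ]. -/

import Mathlib

/-!
Expand `⟪Ax, x⟫ = ∑ᵢ ∑ⱼ ⟪Aᵢⱼ xⱼ, xᵢ⟫`. A diagonal term is at most `w(Aᵢᵢ) ‖xᵢ‖²`, and an
off-diagonal one at most `‖Aᵢⱼ‖ ‖xⱼ‖ ‖xᵢ‖ ≤ ‖Aᵢⱼ‖ (‖xᵢ‖² + ‖xⱼ‖²) / 2`. Collecting the coefficient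
of each `‖xᵢ‖²` bounds `|⟪Ax, x⟫|` by a convex combination of the quantities
`w(Aᵢᵢ) + ½ ∑_{j ≠ i} (‖Aᵢⱼ‖ + ‖Aⱼᵢ‖)`, hence by their maximum.
-/

open Complex

variable {H : Type*} [NormedAddCommGroup H] [InnerProductSpace ℂ H] [CompleteSpace H]

/-- The numerical radius `w(T) = sup {|⟨Tx,x⟩| : ‖x‖ = 1}`. -/
noncomputable def numRadius (T : H →L[ℂ] H) : ℝ :=
  sSup {r : ℝ | ∃ x : H, ‖x‖ = 1 ∧ r = ‖(inner ℂ (T x) x : ℂ)‖}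

/-- The Crawford number `m(T) = inf {|⟨Tx,x⟩| : ‖x‖ = 1}`. -/
noncomputable def crawford (T : H →L[ℂ] H) : ℝ :=
  sInf {r : ℝ | ∃ x : H, ‖x‖ = 1 ∧ r = ‖(inner ℂ (T x) x : ℂ)‖}

/-- The real part `Re(T) = (T + T*)/2`. -/
noncomputable def reOp (T : H →L[ℂ] H) : H →L[ℂ] H := (2 : ℂ)⁻¹ • (T + star T)

/-- The imaginary part `Im(T) = (T - T*)/(2i)`. -/
noncomputable def imOp (T : H →L[ℂ] H) : H →L[ℂ] H := (2 * Complex.I)⁻¹ • (T - star T)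

open Finset

section NumRadius

variable {E : Type*} [NormedAddCommGroup E] [InnerProductSpace ℂ E]

lemma numRadius_nonneg (T : E →L[ℂ] E) : 0 ≤ numRadius T :=
  Real.sSup_nonneg (by rintro r ⟨x, -, rfl⟩; positivity)

lemma norm_inner_apply_self_le_numRadius_mul_sq (T : E →L[ℂ] E) (y : E) :
    ‖(inner ℂ (T y) y : ℂ)‖ ≤ numRadius T * ‖y‖ ^ 2 := by
  rcases eq_or_ne y 0 with rfl | hy
  · simp
  have hunit : ‖y‖⁻¹ ^ 2 * ‖(inner ℂ (T y) y : ℂ)‖ ≤ numRadius T := by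
    have hbdd : BddAbove {r : ℝ | ∃ x : E, ‖x‖ = 1 ∧ r = ‖(inner ℂ (T x) x : ℂ)‖} := by
      refine ⟨‖T‖, ?_⟩
      rintro r ⟨x, hx, rfl⟩
      calc ‖(inner ℂ (T x) x : ℂ)‖ ≤ ‖T x‖ * ‖x‖ := norm_inner_le_norm _ _
        _ ≤ ‖T‖ * ‖x‖ * ‖x‖ := by gcongr; exact T.le_opNorm x
        _ = ‖T‖ := by rw [hx, mul_one, mul_one]
    refine le_csSup hbdd ⟨(‖y‖⁻¹ : ℂ) • y, norm_smul_inv_norm hy, ?_⟩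
    simp only [map_smul, inner_smul_left, inner_smul_right, norm_mul, map_inv₀,
      Complex.conj_ofReal, norm_inv, Complex.norm_real, norm_norm]
    ring
  rwa [inv_pow, inv_mul_le_iff₀ (by positivity), mul_comm] at hunit

lemma numRadius_le_of_forall_norm_inner_le {T : E →L[ℂ] E} {M : ℝ} (hM : 0 ≤ M)
    (h : ∀ x, ‖(inner ℂ (T x) x : ℂ)‖ ≤ M * ‖x‖ ^ 2) : numRadius T ≤ M := by
  refine Real.sSup_le ?_ hM
  rintro r ⟨x, hx, rfl⟩
  simpa [hx] using h x

end NumRadius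

lemma norm_inner_apply_le_opNorm_mul_avg_sq {𝕜 E F : Type*} [RCLike 𝕜]
    [NormedAddCommGroup E] [InnerProductSpace 𝕜 E] [NormedAddCommGroup F] [InnerProductSpace 𝕜 F]
    (T : E →L[𝕜] F) (x : E) (y : F) :
    ‖(inner 𝕜 (T x) y : 𝕜)‖ ≤ ‖T‖ * ((‖y‖ ^ 2 + ‖x‖ ^ 2) / 2) :=
  calc ‖(inner 𝕜 (T x) y : 𝕜)‖ ≤ ‖T x‖ * ‖y‖ := norm_inner_le_norm _ _
    _ ≤ ‖T‖ * (‖x‖ * ‖y‖) := by rw [← mul_assoc]; gcongr; exact T.le_opNorm x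
    _ ≤ ‖T‖ * ((‖y‖ ^ 2 + ‖x‖ ^ 2) / 2) := by
      gcongr; nlinarith [sq_nonneg (‖x‖ - ‖y‖)]

section OffDiagonalSums

variable {ι : Type*} [Fintype ι] [DecidableEq ι]

lemma sum_sum_erase_comm {M : Type*} [AddCommMonoid M] (f : ι → ι → M) :
    ∑ i, ∑ j ∈ univ.erase i, f i j = ∑ i, ∑ j ∈ univ.erase i, f j i :=
  sum_comm' fun i j => by simp [ne_comm]

lemma sum_sum_erase_mul_avg (a : ι → ι → ℝ) (s : ι → ℝ) :
    ∑ i, ∑ j ∈ univ.erase i, a i j * ((s i + s j) / 2)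
      = ∑ i, s i * ((1 / 2) * ∑ j ∈ univ.erase i, (a i j + a j i)) := by
  have hsplit : ∀ i, ∑ j ∈ univ.erase i, a i j * ((s i + s j) / 2)
      = ∑ j ∈ univ.erase i, a i j * s i / 2 + ∑ j ∈ univ.erase i, a i j * s j / 2 := fun i => by
    rw [← sum_add_distrib]; exact sum_congr rfl fun j _ => by ring
  have hswap : ∑ i, ∑ j ∈ univ.erase i, a i j * s j / 2
      = ∑ i, ∑ j ∈ univ.erase i, a j i * s i / 2 := sum_sum_erase_comm _
  rw [sum_congr rfl fun i _ => hsplit i, sum_add_distrib, hswap, ← sum_add_distrib]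
  refine sum_congr rfl fun i _ => ?_
  rw [← sum_add_distrib, mul_sum, mul_sum]
  exact sum_congr rfl fun j _ => by ring

end OffDiagonalSums

lemma inner_apply_eq_sum_blocks {𝕜 ι : Type*} [RCLike 𝕜] [Fintype ι] {Hs : ι → Type*}
    [∀ i, NormedAddCommGroup (Hs i)] [∀ i, InnerProductSpace 𝕜 (Hs i)]
    (A : PiLp 2 Hs →L[𝕜] PiLp 2 Hs) (Ab : ∀ i j, Hs j →L[𝕜] Hs i)
    (hA : ∀ (x : PiLp 2 Hs) i, A x i = ∑ j, Ab i j (x j)) (x y : PiLp 2 Hs) :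
    (inner 𝕜 (A x) y : 𝕜) = ∑ i, ∑ j, (inner 𝕜 (Ab i j (x j)) (y i) : 𝕜) := by
  simp only [PiLp.inner_apply, hA, sum_inner]

lemma norm_inner_apply_self_le_sum_blocks {ι : Type*} [Fintype ι] [DecidableEq ι]
    {Hs : ι → Type*} [∀ i, NormedAddCommGroup (Hs i)] [∀ i, InnerProductSpace ℂ (Hs i)]
    (A : PiLp 2 Hs →L[ℂ] PiLp 2 Hs) (Ab : ∀ i j, Hs j →L[ℂ] Hs i)
    (hA : ∀ (x : PiLp 2 Hs) i, A x i = ∑ j, Ab i j (x j)) (x : PiLp 2 Hs) :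
    ‖(inner ℂ (A x) x : ℂ)‖ ≤ ∑ i, ‖x i‖ ^ 2 *
      (numRadius (Ab i i) + (1 / 2) * ∑ j ∈ univ.erase i, (‖Ab i j‖ + ‖Ab j i‖)) := by
  rw [inner_apply_eq_sum_blocks A Ab hA]
  calc ‖∑ i, ∑ j, (inner ℂ (Ab i j (x j)) (x i) : ℂ)‖
      ≤ ∑ i, ∑ j, ‖(inner ℂ (Ab i j (x j)) (x i) : ℂ)‖ :=
        (norm_sum_le _ _).trans (sum_le_sum fun i _ => norm_sum_le _ _)
    _ ≤ ∑ i, (numRadius (Ab i i) * ‖x i‖ ^ 2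
          + ∑ j ∈ univ.erase i, ‖Ab i j‖ * ((‖x i‖ ^ 2 + ‖x j‖ ^ 2) / 2)) := by
        refine sum_le_sum fun i _ => ?_
        rw [← add_sum_erase _ _ (mem_univ i)]
        gcongr with j
        · exact norm_inner_apply_self_le_numRadius_mul_sq _ _
        · exact norm_inner_apply_le_opNorm_mul_avg_sq _ _ _
    _ = _ := by
        rw [sum_add_distrib, sum_sum_erase_mul_avg, ← sum_add_distrib]
        exact sum_congr rfl fun i _ => by ring

theorem stmt19_general (n : ℕ) (hn : 0 < n) (Hs : Fin n → Type*)
    [∀ i, NormedAddCommGroup (Hs i)] [∀ i, InnerProductSpace ℂ (Hs i)]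
    (A : PiLp 2 Hs →L[ℂ] PiLp 2 Hs) (Ab : ∀ i j, Hs j →L[ℂ] Hs i)
    (hA : ∀ (x : PiLp 2 Hs) (i : Fin n), A x i = ∑ j, Ab i j (x j)) :
    numRadius A ≤
      Finset.univ.sup' (Finset.univ_nonempty_iff.mpr (Fin.pos_iff_nonempty.mp hn))
        (fun i => numRadius (Ab i i)
          + (1/2) * ∑ j ∈ Finset.univ.erase i, (‖Ab i j‖ + ‖Ab j i‖)) := by
  set c : Fin n → ℝ := fun i => numRadius (Ab i i)
      + (1/2) * ∑ j ∈ univ.erase i, (‖Ab i j‖ + ‖Ab j i‖)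
  set M := univ.sup' (univ_nonempty_iff.mpr (Fin.pos_iff_nonempty.mp hn)) c
  have hc : ∀ i, c i ≤ M := fun i => le_sup' c (mem_univ i)
  have hM : 0 ≤ M := (add_nonneg (numRadius_nonneg _) (by positivity)).trans (hc ⟨0, hn⟩)
  refine numRadius_le_of_forall_norm_inner_le hM fun x => ?_
  calc ‖(inner ℂ (A x) x : ℂ)‖ ≤ ∑ i, ‖x i‖ ^ 2 * c i :=
        norm_inner_apply_self_le_sum_blocks A Ab hA x
    _ ≤ ∑ i, ‖x i‖ ^ 2 * M := by gcongr with i; exact hc i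
    _ = M * ‖x‖ ^ 2 := by rw [← sum_mul, PiLp.norm_sq_eq_of_L2, mul_comm]

theorem stmt19 (n : ℕ) (hn : 0 < n) (Hs : Fin n → Type*)
    [∀ i, NormedAddCommGroup (Hs i)] [∀ i, InnerProductSpace ℂ (Hs i)]
    [∀ i, CompleteSpace (Hs i)]
    (A : PiLp 2 Hs →L[ℂ] PiLp 2 Hs) (Ab : ∀ i j, Hs j →L[ℂ] Hs i)
    (hA : ∀ (x : PiLp 2 Hs) (i : Fin n), A x i = ∑ j, Ab i j (x j)) :
    numRadius A ≤
      Finset.univ.sup' (Finset.univ_nonempty_iff.mpr (Fin.pos_iff_nonempty.mp hn))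
        (fun i => numRadius (Ab i i)
          + (1/2) * ∑ j ∈ Finset.univ.erase i, (‖Ab i j‖ + ‖Ab j i‖)) :=
  stmt19_general n hn Hs A Ab hA
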